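/- Let (d_j, F_j)_{j≥1} be a real-valued martingale difference sequence with |d_j| ≤ c almost surely for all j, where c > 0, and let M_j = Σ_{i=1}^j d_i. Then for all x, y > 0 and all n ≥ 1, P( sup_{1≤j≤n} |M_j| ≥ x and Σ_{j=1}^n E(d_j² | F_{j−1}) ≤ y ) ≤ 2 exp( −(y/c²) φ(xc/y) ), where φ(u) = (1+u) ln(1+u) − u. -/

import Mathlib

open MeasureTheory Filter Set

noncomputable section

section AuxPinelis
open Real Nat

lemma exp_series_tail (x : ℝ) :
    Real.exp x = 1 + x + ∑' k : ℕ, x ^ (k + 2) / ((k + 2)! : ℝ) := by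
  have h := Real.summable_pow_div_factorial x
  have h1 : Summable fun k : ℕ => x ^ (k + 1) / ((k + 1)! : ℝ) :=
    (summable_nat_add_iff 1).2 h
  have hx : Real.exp x = ∑' n : ℕ, x ^ n / (n ! : ℝ) := by
    rw [Real.exp_eq_exp_ℝ, NormedSpace.exp_eq_tsum_div]
  rw [hx, h.tsum_eq_zero_add, h1.tsum_eq_zero_add]
  simp [factorial]
  ring

set_option maxHeartbeats 1000000 in
lemma bennett_pointwise {b s : ℝ} (hb : 0 < b) (hs : |s| ≤ b) :
    Real.exp s ≤ 1 + s + (Real.exp b - 1 - b) / b ^ 2 * s ^ 2 := by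
  have hb2 : (0:ℝ) < b ^ 2 := by positivity
  have hsum_s : Summable fun k : ℕ => s ^ (k + 2) / ((k + 2)! : ℝ) :=
    (summable_nat_add_iff 2).2 (Real.summable_pow_div_factorial s)
  have hsum_b : Summable fun k : ℕ => b ^ (k + 2) / ((k + 2)! : ℝ) :=
    (summable_nat_add_iff 2).2 (Real.summable_pow_div_factorial b)
  have hterm : ∀ k : ℕ, s ^ (k + 2) / ((k + 2)! : ℝ)
      ≤ s ^ 2 / b ^ 2 * (b ^ (k + 2) / ((k + 2)! : ℝ)) := by
    intro k
    have hfac : (0:ℝ) < ((k + 2)! : ℝ) := by positivity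
    have h1 : s ^ (k + 2) ≤ |s| ^ (k + 2) := by
      rw [← abs_pow]; exact le_abs_self _
    have h2 : |s| ^ (k + 2) = s ^ 2 * |s| ^ k := by
      rw [pow_add, sq_abs, mul_comm]
    have h3 : |s| ^ k ≤ b ^ k := pow_le_pow_left₀ (abs_nonneg s) hs k
    have h4 : s ^ 2 * b ^ k = s ^ 2 / b ^ 2 * b ^ (k + 2) := by
      field_simp; ring
    have h5 : s ^ (k + 2) ≤ s ^ 2 / b ^ 2 * b ^ (k + 2) := by
      rw [← h4]
      calc s ^ (k + 2) ≤ |s| ^ (k + 2) := h1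
        _ = s ^ 2 * |s| ^ k := h2
        _ ≤ s ^ 2 * b ^ k := by
            apply mul_le_mul_of_nonneg_left h3 (sq_nonneg s)
    rw [div_le_iff₀ hfac]
    calc s ^ (k + 2) ≤ s ^ 2 / b ^ 2 * b ^ (k + 2) := h5
      _ = s ^ 2 / b ^ 2 * (b ^ (k + 2) / ((k + 2)! : ℝ)) * ((k + 2)! : ℝ) := by
          field_simp
  have htail : (∑' k : ℕ, s ^ (k + 2) / ((k + 2)! : ℝ))
      ≤ s ^ 2 / b ^ 2 * ∑' k : ℕ, b ^ (k + 2) / ((k + 2)! : ℝ) := by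
    rw [← tsum_mul_left]
    exact Summable.tsum_le_tsum hterm hsum_s (hsum_b.mul_left _)
  have hb' : (∑' k : ℕ, b ^ (k + 2) / ((k + 2)! : ℝ)) = Real.exp b - 1 - b := by
    have := exp_series_tail b; linarith
  have hs' := exp_series_tail s
  rw [hb'] at htail
  have heq : s ^ 2 / b ^ 2 * (Real.exp b - 1 - b)
      = (Real.exp b - 1 - b) / b ^ 2 * s ^ 2 := by ring
  rw [hs']
  linarith

lemma supermartingale_maximal
    {Ω : Type*} [mΩ : MeasurableSpace Ω] (P : Measure Ω) [IsProbabilityMeasure P]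
    (ℱ : MeasureTheory.Filtration ℕ mΩ) {S : ℕ → Ω → ℝ}
    (hS : Supermartingale S ℱ P) (hpos : ∀ j ω, 0 ≤ S j ω) (hS0 : ∀ ω, S 0 ω = 1)
    {a : ℝ} (ha : 0 < a) (n : ℕ) :
    P {ω | ∃ j ≤ n, a ≤ S j ω} ≤ ENNReal.ofReal (1 / a) := by
  set T : Ω → WithTop ℕ := fun ω => (hittingBtwn S (Set.Ici a) 0 n ω : ℕ) with hT_def
  have hT : IsStoppingTime ℱ T :=
    hS.stronglyAdapted.adapted.isStoppingTime_hittingBtwn measurableSet_Ici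
  have hTle : ∀ ω, T ω ≤ n := fun ω => WithTop.coe_le_coe.mpr (hittingBtwn_le ω)
  have hsub : Submartingale (-S) ℱ P := hS.neg
  have hint : Integrable (stoppedValue S T) P := by
    have := hsub.integrable_stoppedValue hT hTle
    have heq : stoppedValue (-S) T = -(stoppedValue S T) := by
      ext ω; simp [stoppedValue]
    rw [heq] at this
    simpa using this.neg
  have hmean : ∫ ω, stoppedValue S T ω ∂P ≤ 1 := by
    have h0 : IsStoppingTime ℱ (fun _ : Ω => ((0 : ℕ) : WithTop ℕ)) := isStoppingTime_const ℱ 0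
    have := hsub.expected_stoppedValue_mono h0 hT (fun ω => WithTop.coe_le_coe.mpr (Nat.zero_le _)) hTle
    have heqT : stoppedValue (-S) T = -(stoppedValue S T) := by
      ext ω; simp [stoppedValue]
    have heq0 : stoppedValue (-S) (fun _ => ((0:ℕ) : WithTop ℕ)) = -(S 0) := by
      ext ω; simp [stoppedValue]
    rw [heqT, heq0] at this
    simp only [Pi.neg_apply] at this
    rw [integral_neg, integral_neg, neg_le_neg_iff] at this
    calc ∫ ω, stoppedValue S T ω ∂P ≤ ∫ ω, S 0 ω ∂P := this
      _ = 1 := by simp only [hS0]; simp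
  set B := {ω | ∃ j ≤ n, a ≤ S j ω} with hB_def
  have hBmeas : MeasurableSet B := by
    have : B = ⋃ j ∈ Set.Iic n, S j ⁻¹' (Set.Ici a) := by
      ext ω; simp [hB_def]
    rw [this]
    exact MeasurableSet.biUnion (Set.to_countable _)
      (fun j _ => ((hS.stronglyAdapted j).mono (ℱ.le j)).measurable measurableSet_Ici)
  have hBge : ∀ ω ∈ B, a ≤ stoppedValue S T ω := by
    intro ω hω
    obtain ⟨j, hjn, hja⟩ := hω
    have : stoppedValue S T ω ∈ Set.Ici a :=
      stoppedValue_hittingBtwn_mem ⟨j, ⟨Nat.zero_le _, hjn⟩, hja⟩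
    exact this
  have key : a * (P B).toReal ≤ 1 := by
    have h1 : ∫ ω in B, a ∂P ≤ ∫ ω in B, stoppedValue S T ω ∂P :=
      setIntegral_mono_on integrableOn_const
        hint.integrableOn hBmeas (fun ω hω => hBge ω hω)
    have h2 : ∫ ω in B, stoppedValue S T ω ∂P ≤ ∫ ω, stoppedValue S T ω ∂P :=
      setIntegral_le_integral hint (Filter.Eventually.of_forall fun ω => hpos _ _)
    rw [setIntegral_const, smul_eq_mul, mul_comm, measureReal_def] at h1
    linarith
  have hfin : P B ≠ ⊤ := measure_ne_top _ _
  have : (P B).toReal ≤ 1 / a := by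
    rw [le_div_iff₀ ha]; linarith
  calc P B = ENNReal.ofReal ((P B).toReal) := (ENNReal.ofReal_toReal hfin).symm
    _ ≤ ENNReal.ofReal (1 / a) := ENNReal.ofReal_le_ofReal this



lemma one_sided
    {Ω : Type*} [mΩ : MeasurableSpace Ω] (P : Measure Ω) [IsProbabilityMeasure P]
    (ℱ : MeasureTheory.Filtration ℕ mΩ)
    (d : ℕ → Ω → ℝ) (c : ℝ) (hc : 0 < c)
    (h_adapted : ∀ j, 1 ≤ j → StronglyMeasurable[ℱ j] (d j))
    (h_int : ∀ j, 1 ≤ j → Integrable (d j) P)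
    (h_mds : ∀ j, 1 ≤ j → P[d j|ℱ (j - 1)] =ᵐ[P] 0)
    (h_bdd : ∀ j, 1 ≤ j → ∀ᵐ ω ∂P, |d j ω| ≤ c)
    (x y : ℝ) (hx : 0 < x) (hy : 0 < y) (n : ℕ) :
    P {ω | (∃ j, 1 ≤ j ∧ j ≤ n ∧ x ≤ ∑ i ∈ Finset.Icc 1 j, d i ω) ∧
        (∑ j ∈ Finset.Icc 1 n, (P[fun ω' => (d j ω') ^ 2|ℱ (j - 1)]) ω) ≤ y} ≤
      ENNReal.ofReal (Real.exp (-(y / c ^ 2) *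
        ((1 + x * c / y) * Real.log (1 + x * c / y) - x * c / y))) := by
  set u : ℝ := x * c / y with hu_def
  have hu : 0 < u := by positivity
  set L : ℝ := Real.log (1 + u) / c with hL_def
  have hlog : 0 < Real.log (1 + u) := Real.log_pos (by linarith)
  have hL : 0 < L := div_pos hlog hc
  have hLc : L * c = Real.log (1 + u) := div_mul_cancel₀ _ hc.ne'
  have hexpLc : Real.exp (L * c) = 1 + u := by
    rw [hLc, Real.exp_log (by linarith)]
  set g : ℝ := (Real.exp (L * c) - 1 - L * c) / c ^ 2 with hg_def
  have hg0 : 0 ≤ g := by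
    have := Real.add_one_le_exp (L * c)
    have hc2 : (0:ℝ) < c ^ 2 := by positivity
    apply div_nonneg _ hc2.le
    linarith
  set W : ℕ → Ω → ℝ := fun i => P[fun ω' => (d i ω') ^ 2|ℱ (i - 1)] with hW_def
  set M : ℕ → Ω → ℝ := fun j ω => ∑ i ∈ Finset.Icc 1 j, d i ω with hM_def
  set V : ℕ → Ω → ℝ := fun j ω => ∑ i ∈ Finset.Icc 1 j, W i ω with hV_def
  set S : ℕ → Ω → ℝ := fun j ω => Real.exp (L * M j ω - g * V j ω) with hS_def
  -- integrability of squares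
  have hd_meas : ∀ i, 1 ≤ i → Measurable (d i) :=
    fun i hi => ((h_adapted i hi).mono (ℱ.le i)).measurable
  have hd2_int : ∀ i, 1 ≤ i → Integrable (fun ω => (d i ω) ^ 2) P := by
    intro i hi
    refine Integrable.mono' (integrable_const (c ^ 2))
      ((hd_meas i hi).pow_const 2).aestronglyMeasurable ?_
    filter_upwards [h_bdd i hi] with ω hω
    rw [Real.norm_eq_abs, abs_pow]
    exact pow_le_pow_left₀ (abs_nonneg _) hω 2
  -- the good a.e. set
  have hgood : ∀ᵐ ω ∂P, (∀ i, 1 ≤ i → |d i ω| ≤ c) ∧ (∀ i, 1 ≤ i → 0 ≤ W i ω) := by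
    refine Eventually.and ?_ ?_
    · rw [ae_all_iff]
      intro i
      by_cases hi : 1 ≤ i
      · filter_upwards [h_bdd i hi] with ω hω _ using hω
      · exact Eventually.of_forall fun ω h => absurd h hi
    · rw [ae_all_iff]
      intro i
      by_cases hi : 1 ≤ i
      · filter_upwards [condExp_nonneg (Eventually.of_forall fun ω => sq_nonneg (d i ω))]
          with ω hω _ using hω
      · exact Eventually.of_forall fun ω h => absurd h hi
  -- adaptedness of S
  have hM_meas : ∀ j, Measurable[ℱ j] (M j) := by
    intro j
    apply Finset.measurable_sum
    intro i hi
    rw [Finset.mem_Icc] at hi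
    exact ((h_adapted i hi.1).mono (ℱ.mono hi.2)).measurable
  have hV_meas : ∀ j, Measurable[ℱ j] (V j) := by
    intro j
    apply Finset.measurable_sum
    intro i hi
    rw [Finset.mem_Icc] at hi
    exact (stronglyMeasurable_condExp.mono
      (ℱ.mono ((Nat.sub_le i 1).trans hi.2))).measurable
  have hS_meas : ∀ j, StronglyMeasurable[ℱ j] (S j) := by
    intro j
    exact (Real.measurable_exp.comp
      (((hM_meas j).const_mul L).sub ((hV_meas j).const_mul g))).stronglyMeasurable
  -- integrability of S
  have hS_bdd : ∀ j, ∀ᵐ ω ∂P, ‖S j ω‖ ≤ Real.exp (L * (j * c)) := by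
    intro j
    filter_upwards [hgood] with ω hω
    rw [Real.norm_eq_abs, abs_of_pos (Real.exp_pos _), Real.exp_le_exp]
    have hMb : M j ω ≤ j * c := by
      calc M j ω ≤ |M j ω| := le_abs_self _
        _ ≤ ∑ i ∈ Finset.Icc 1 j, |d i ω| := Finset.abs_sum_le_sum_abs _ _
        _ ≤ ∑ i ∈ Finset.Icc 1 j, c := by
            refine Finset.sum_le_sum fun i hi => ?_
            rw [Finset.mem_Icc] at hi
            exact hω.1 i hi.1
        _ = j * c := by rw [Finset.sum_const, Nat.card_Icc]; simp [nsmul_eq_mul]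
    have hVnn : 0 ≤ V j ω := by
      refine Finset.sum_nonneg fun i hi => ?_
      rw [Finset.mem_Icc] at hi
      exact hω.2 i hi.1
    nlinarith [mul_nonneg hg0 hVnn, hL.le]
  have hS_int : ∀ j, Integrable (S j) P := by
    intro j
    exact Integrable.mono' (integrable_const (Real.exp (L * (j * c))))
      ((hS_meas j).mono (ℱ.le j)).aestronglyMeasurable (hS_bdd j)
  -- key one-step conditional expectation bound
  have hstep : ∀ j : ℕ, P[S (j + 1)|ℱ j] ≤ᵐ[P] S j := by
    intro j
    have hj1 : 1 ≤ j + 1 := Nat.le_add_left 1 j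
    set A : Ω → ℝ := fun ω => Real.exp (L * M j ω - g * V (j + 1) ω) with hA_def
    set B : Ω → ℝ := fun ω => Real.exp (L * d (j + 1) ω) with hB_def
    have hMsucc : ∀ ω, M (j + 1) ω = M j ω + d (j + 1) ω := by
      intro ω
      simp only [hM_def]
      rw [Finset.sum_Icc_succ_top hj1]
    have hVsucc : ∀ ω, V (j + 1) ω = V j ω + W (j + 1) ω := by
      intro ω
      simp only [hV_def]
      rw [Finset.sum_Icc_succ_top hj1]
    have hSAB : S (j + 1) = fun ω => A ω * B ω := by
      funext ω
      simp only [hS_def, hA_def, hB_def]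
      rw [← Real.exp_add, hMsucc]
      ring_nf
    have hVj1_meas : Measurable[ℱ j] (V (j + 1)) := by
      apply Finset.measurable_sum
      intro i hi
      rw [Finset.mem_Icc] at hi
      have : i - 1 ≤ j := by omega
      exact (stronglyMeasurable_condExp.mono (ℱ.mono this)).measurable
    have hA_meas : StronglyMeasurable[ℱ j] A :=
      (Real.measurable_exp.comp
        (((hM_meas j).const_mul L).sub (hVj1_meas.const_mul g))).stronglyMeasurable
    have hB_int : Integrable B P := by
      refine Integrable.mono' (integrable_const (Real.exp (L * c)))
        (Real.measurable_exp.comp ((hd_meas _ hj1).const_mul L)).aestronglyMeasurable ?_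
      filter_upwards [h_bdd _ hj1] with ω hω
      rw [Real.norm_eq_abs, abs_of_pos (Real.exp_pos _), Real.exp_le_exp]
      have : d (j + 1) ω ≤ c := (abs_le.mp hω).2
      nlinarith [hL.le]
    have hAB_int : Integrable (fun ω => A ω * B ω) P := hSAB ▸ hS_int (j + 1)
    have hpull := condExp_mul_of_stronglyMeasurable_left hA_meas hAB_int hB_int
    -- bound on P[B | ℱ j]
    have hBle : P[B|ℱ j] ≤ᵐ[P] fun ω => Real.exp (g * W (j + 1) ω) := by
      have hptwise : B ≤ᵐ[P] fun ω => 1 + L * d (j + 1) ω + g * (d (j + 1) ω) ^ 2 := by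
        filter_upwards [h_bdd _ hj1] with ω hω
        have hb : |L * d (j + 1) ω| ≤ L * c := by
          rw [abs_mul, abs_of_pos hL]
          exact mul_le_mul_of_nonneg_left hω hL.le
        have := bennett_pointwise (mul_pos hL hc) hb
        have heq : (Real.exp (L * c) - 1 - L * c) / (L * c) ^ 2 * (L * d (j + 1) ω) ^ 2
            = g * (d (j + 1) ω) ^ 2 := by
          rw [hg_def]
          field_simp
        simp only [hB_def]
        calc Real.exp (L * d (j + 1) ω)
            ≤ 1 + L * d (j + 1) ω
              + (Real.exp (L * c) - 1 - L * c) / (L * c) ^ 2 * (L * d (j + 1) ω) ^ 2 := this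
          _ = 1 + L * d (j + 1) ω + g * (d (j + 1) ω) ^ 2 := by rw [heq]
      have hrhs_int : Integrable (fun ω => 1 + L * d (j + 1) ω + g * (d (j + 1) ω) ^ 2) P := by
        exact ((integrable_const (1:ℝ)).add ((h_int _ hj1).const_mul L)).add
          ((hd2_int _ hj1).const_mul g)
      have hmono := condExp_mono hB_int hrhs_int hptwise (m := ℱ j)
      -- compute the condexp of the RHS
      have hsplit : P[fun ω => 1 + L * d (j + 1) ω + g * (d (j + 1) ω) ^ 2|ℱ j]
          =ᵐ[P] fun ω => 1 + L * (P[d (j + 1)|ℱ j]) ω + g * (P[fun ω' => (d (j + 1) ω') ^ 2|ℱ j]) ω := by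
        have e1 : P[fun ω => 1 + L * d (j + 1) ω + g * (d (j + 1) ω) ^ 2|ℱ j]
            =ᵐ[P] P[fun ω => 1 + L * d (j + 1) ω|ℱ j] + P[fun ω => g * (d (j + 1) ω) ^ 2|ℱ j] :=
          condExp_add ((integrable_const (1:ℝ)).add ((h_int _ hj1).const_mul L))
            ((hd2_int _ hj1).const_mul g) (ℱ j)
        have e2 : P[fun ω => 1 + L * d (j + 1) ω|ℱ j]
            =ᵐ[P] P[fun _ => (1:ℝ)|ℱ j] + P[fun ω => L * d (j + 1) ω|ℱ j] :=
          condExp_add (integrable_const (1:ℝ)) ((h_int _ hj1).const_mul L) (ℱ j)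
        have e3 : P[fun ω => L * d (j + 1) ω|ℱ j] =ᵐ[P] fun ω => L * (P[d (j + 1)|ℱ j]) ω := by
          have := condExp_smul (μ := P) (m := ℱ j) L (d (j + 1))
          filter_upwards [this] with ω hω
          simp only [Pi.smul_apply, smul_eq_mul] at hω; exact hω
        have e4 : P[fun ω => g * (d (j + 1) ω) ^ 2|ℱ j]
            =ᵐ[P] fun ω => g * (P[fun ω' => (d (j + 1) ω') ^ 2|ℱ j]) ω := by
          have := condExp_smul (μ := P) (m := ℱ j) g (fun ω => (d (j + 1) ω) ^ 2)
          filter_upwards [this] with ω hω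
          simp only [Pi.smul_apply, smul_eq_mul] at hω; exact hω
        have e5 : P[fun _ => (1:ℝ)|ℱ j] = fun _ => (1:ℝ) := condExp_const (ℱ.le j) 1
        filter_upwards [e1, e2, e3, e4] with ω h1 h2 h3 h4
        rw [h1]
        simp only [Pi.add_apply]
        rw [h2]
        simp only [Pi.add_apply]
        rw [e5, h3, h4]
      have hmds' : P[d (j + 1)|ℱ j] =ᵐ[P] 0 := by
        have := h_mds (j + 1) hj1
        simpa using this
      have hW' : (P[fun ω' => (d (j + 1) ω') ^ 2|ℱ j]) = W (j + 1) := by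
        simp only [hW_def, Nat.add_sub_cancel]
      filter_upwards [hmono, hsplit, hmds'] with ω h1 h2 h3
      calc (P[B|ℱ j]) ω ≤ (P[fun ω => 1 + L * d (j+1) ω + g * (d (j+1) ω) ^ 2|ℱ j]) ω := h1
        _ = 1 + L * (P[d (j + 1)|ℱ j]) ω + g * (P[fun ω' => (d (j + 1) ω') ^ 2|ℱ j]) ω := h2
        _ = 1 + g * W (j + 1) ω := by rw [hW'] at *; simp [h3]
        _ ≤ Real.exp (g * W (j + 1) ω) := by
            have := Real.add_one_le_exp (g * W (j + 1) ω); linarith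
    -- combine
    have hSeq : P[S (j + 1)|ℱ j] =ᵐ[P] fun ω => A ω * (P[B|ℱ j]) ω := by
      rw [hSAB]
      have : (fun ω => A ω * B ω) = A * B := rfl
      rw [this]
      filter_upwards [hpull] with ω hω
      simpa using hω
    filter_upwards [hSeq, hBle] with ω h1 h2
    rw [h1]
    have hstep2 : A ω * (P[B|ℱ j]) ω ≤ A ω * Real.exp (g * W (j + 1) ω) :=
      mul_le_mul_of_nonneg_left h2 (Real.exp_pos _).le
    have hfinal : A ω * Real.exp (g * W (j + 1) ω) = S j ω := by
      simp only [hA_def, hS_def]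
      rw [← Real.exp_add, hVsucc]
      ring_nf
    linarith
  -- supermartingale
  have hS_adapted : StronglyAdapted ℱ S := fun j => hS_meas j
  have hsuper : Supermartingale S ℱ P := supermartingale_nat hS_adapted hS_int hstep
  have hS0 : ∀ ω, S 0 ω = 1 := by
    intro ω
    simp [hS_def, hM_def, hV_def]
  set a : ℝ := Real.exp (L * x - g * y) with ha_def
  have ha : 0 < a := Real.exp_pos _
  have hmax := supermartingale_maximal P ℱ hsuper (fun j ω => (Real.exp_pos _).le) hS0 ha n
  -- event inclusion
  have hincl : {ω | (∃ j, 1 ≤ j ∧ j ≤ n ∧ x ≤ ∑ i ∈ Finset.Icc 1 j, d i ω) ∧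
      (∑ j ∈ Finset.Icc 1 n, (P[fun ω' => (d j ω') ^ 2|ℱ (j - 1)]) ω) ≤ y}
      ≤ᵐ[P] {ω | ∃ j ≤ n, a ≤ S j ω} := by
    filter_upwards [hgood] with ω hω hmem
    obtain ⟨⟨j, hj1, hjn, hjx⟩, hVy⟩ := hmem
    refine ⟨j, hjn, ?_⟩
    have hVj : V j ω ≤ y := by
      have hsub : V j ω ≤ V n ω := by
        refine Finset.sum_le_sum_of_subset_of_nonneg
          (Finset.Icc_subset_Icc_right hjn) fun i hi _ => ?_
        rw [Finset.mem_Icc] at hi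
        exact hω.2 i hi.1
      exact hsub.trans hVy
    have : L * x - g * y ≤ L * M j ω - g * V j ω := by
      have h1 : L * x ≤ L * M j ω := mul_le_mul_of_nonneg_left hjx hL.le
      have h2 : g * V j ω ≤ g * y := mul_le_mul_of_nonneg_left hVj hg0
      linarith
    simpa only [ha_def, hS_def, Real.exp_le_exp] using this
  have hfin : P {ω | (∃ j, 1 ≤ j ∧ j ≤ n ∧ x ≤ ∑ i ∈ Finset.Icc 1 j, d i ω) ∧
      (∑ j ∈ Finset.Icc 1 n, (P[fun ω' => (d j ω') ^ 2|ℱ (j - 1)]) ω) ≤ y}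
      ≤ ENNReal.ofReal (1 / a) := le_trans (measure_mono_ae hincl) hmax
  -- final arithmetic
  have harith : 1 / a = Real.exp (-(y / c ^ 2) *
      ((1 + x * c / y) * Real.log (1 + x * c / y) - x * c / y)) := by
    rw [ha_def, one_div, ← Real.exp_neg]
    congr 1
    rw [hg_def, hexpLc, hLc, hL_def, hu_def]
    field_simp
    ring
  rw [harith] at hfin
  exact hfin

end AuxPinelis

open Nat in
/-- **Pinelis-type maximal exponential inequality for bounded martingale differences.**
If `(d_j, F_j)` is a martingale difference sequence with `|d_j| ≤ c`, and
`M_j = ∑_{i=1}^j d_i`, then for all `x, y > 0`,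
`P( sup_{1≤j≤n} |M_j| ≥ x and ∑_{j=1}^n E(d_j²|F_{j-1}) ≤ y )
   ≤ 2 exp( -(y/c²) φ(xc/y) )` where `φ u = (1+u) ln(1+u) - u`. -/
theorem pinelis_maximal_inequality
    {Ω : Type*} [mΩ : MeasurableSpace Ω] (P : Measure Ω) [IsProbabilityMeasure P]
    (ℱ : MeasureTheory.Filtration ℕ mΩ)
    (d : ℕ → Ω → ℝ) (c : ℝ) (hc : 0 < c)
    (h_adapted : ∀ j, 1 ≤ j → StronglyMeasurable[ℱ j] (d j))
    (h_int : ∀ j, 1 ≤ j → Integrable (d j) P)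
    (h_mds : ∀ j, 1 ≤ j → P[d j|ℱ (j - 1)] =ᵐ[P] 0)
    (h_bdd : ∀ j, 1 ≤ j → ∀ᵐ ω ∂P, |d j ω| ≤ c)
    (M : ℕ → Ω → ℝ) (hM : ∀ j ω, M j ω = ∑ i ∈ Finset.Icc 1 j, d i ω)
    (x y : ℝ) (hx : 0 < x) (hy : 0 < y) (n : ℕ) (hn : 1 ≤ n) :
    (P {ω | (∃ j, 1 ≤ j ∧ j ≤ n ∧ x ≤ |M j ω|) ∧
        (∑ j ∈ Finset.Icc 1 n, (P[fun ω' => (d j ω') ^ 2|ℱ (j - 1)]) ω) ≤ y}).toReal ≤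
      2 * Real.exp (-(y / c ^ 2) *
        ((1 + x * c / y) * Real.log (1 + x * c / y) - x * c / y)) := by
  set r : ℝ := Real.exp (-(y / c ^ 2) *
      ((1 + x * c / y) * Real.log (1 + x * c / y) - x * c / y)) with hr_def
  have hr0 : 0 ≤ r := (Real.exp_pos _).le
  have hplus := one_sided P ℱ d c hc h_adapted h_int h_mds h_bdd x y hx hy n
  have hminus := one_sided P ℱ (fun j => -(d j)) c hc
    (fun j hj => (h_adapted j hj).neg)
    (fun j hj => (h_int j hj).neg)
    (fun j hj => by
      filter_upwards [condExp_neg (m := ℱ (j - 1)) (μ := P) (d j), h_mds j hj] with ω h1 h2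
      simp only [Pi.neg_apply] at h1 ⊢
      rw [h1, h2]
      simp)
    (fun j hj => by filter_upwards [h_bdd j hj] with ω hω; simpa using hω)
    x y hx hy n
  -- the squared condexps agree
  have hsq : ∀ j : ℕ, (fun ω' => ((-(d j)) ω') ^ 2) = fun ω' => (d j ω') ^ 2 := by
    intro j; funext ω'; simp
  have hsub : {ω | (∃ j, 1 ≤ j ∧ j ≤ n ∧ x ≤ |M j ω|) ∧
      (∑ j ∈ Finset.Icc 1 n, (P[fun ω' => (d j ω') ^ 2|ℱ (j - 1)]) ω) ≤ y} ⊆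
      {ω | (∃ j, 1 ≤ j ∧ j ≤ n ∧ x ≤ ∑ i ∈ Finset.Icc 1 j, d i ω) ∧
        (∑ j ∈ Finset.Icc 1 n, (P[fun ω' => (d j ω') ^ 2|ℱ (j - 1)]) ω) ≤ y} ∪
      {ω | (∃ j, 1 ≤ j ∧ j ≤ n ∧ x ≤ ∑ i ∈ Finset.Icc 1 j, (-(d i)) ω) ∧
        (∑ j ∈ Finset.Icc 1 n, (P[fun ω' => ((-(d j)) ω') ^ 2|ℱ (j - 1)]) ω) ≤ y} := by
    intro ω hω
    obtain ⟨⟨j, hj1, hjn, hjx⟩, hV⟩ := hω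
    rw [hM] at hjx
    rcases le_abs.mp hjx with h | h
    · left; exact ⟨⟨j, hj1, hjn, h⟩, hV⟩
    · right
      constructor
      · refine ⟨j, hj1, hjn, ?_⟩
        simp only [Pi.neg_apply]
        rw [← Finset.sum_neg_distrib] at h
        exact h
      · simp only [hsq]
        exact hV
  have hP : P {ω | (∃ j, 1 ≤ j ∧ j ≤ n ∧ x ≤ |M j ω|) ∧
      (∑ j ∈ Finset.Icc 1 n, (P[fun ω' => (d j ω') ^ 2|ℱ (j - 1)]) ω) ≤ y}
      ≤ ENNReal.ofReal (2 * r) := by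
    calc P _ ≤ P (_ ∪ _) := measure_mono hsub
      _ ≤ _ + _ := measure_union_le _ _
      _ ≤ ENNReal.ofReal r + ENNReal.ofReal r := add_le_add hplus hminus
      _ = ENNReal.ofReal (2 * r) := by
          rw [← ENNReal.ofReal_add hr0 hr0]; ring_nf
  exact ENNReal.toReal_le_of_le_ofReal (by positivity) hP
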